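/- The fullerene nanodisc D_2 is a 3-regular graph and its girth equals 5. -/
import Mathlib


/-- The vertices of the fullerene nanodisc `D_2`: the outer 6-cycle `O`, the two
central 18-cycles `A` and `B`, and the inner 6-cycle `I`. -/
inductive D2V
  | O : ZMod 6 → D2V
  | A : ZMod 18 → D2V
  | B : ZMod 18 → D2V
  | I : ZMod 6 → D2V
  deriving DecidableEq, Fintype

open D2V in
/-- The adjacency generating relation of `D_2`: the four cycles, the 6 outer radial
edges `O_i — A_{3i}`, the 6 inner radial edges `I_i — B_{3i}`, and the 12 central
radial edges `A_k — B_{k+1}` for `k ≡ 1 (mod 3)` and `A_k — B_{k+2}` for `k ≡ 2 (mod 3)`. -/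
def d2Rel : D2V → D2V → Bool
  | O i, O j => j == i + 1
  | A k, A l => l == k + 1
  | B k, B l => l == k + 1
  | I i, I j => j == i + 1
  | O i, A k => k == (3 * i.val : ZMod 18)
  | I i, B k => k == (3 * i.val : ZMod 18)
  | A k, B l => (k.val % 3 == 1 && l == k + 1) || (k.val % 3 == 2 && l == k + 2)
  | _, _ => false

/-- The fullerene nanodisc `D_2`. -/
def D2 : SimpleGraph D2V := SimpleGraph.fromRel (fun a b => d2Rel a b = true)

instance : DecidableRel D2.Adj := fun a b =>
  decidable_of_iff _ (SimpleGraph.fromRel_adj _ a b).symm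

def adjB (v w : D2V) : Bool := (v != w) && (d2Rel v w || d2Rel w v)

def univL : List D2V :=
  ((List.range 6).map fun i => D2V.O i) ++ ((List.range 18).map fun i => D2V.A i) ++
  ((List.range 18).map fun i => D2V.B i) ++ ((List.range 6).map fun i => D2V.I i)

def nb (v : D2V) : List D2V := univL.filter (fun w => adjB v w)

set_option maxRecDepth 4000 in
lemma adj_iff : ∀ v w : D2V, D2.Adj v w ↔ adjB v w = true := by decide

set_option maxRecDepth 4000 in
lemma mem_univL : ∀ v : D2V, v ∈ univL := by decide

set_option maxRecDepth 40000 in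
lemma noShortB : ∀ a : D2V, ((nb a).all fun b => (nb b).all fun c =>
    (c == a) || (!adjB a c && ((nb c).all fun d => (d == b) || !adjB d a))) = true := by decide

lemma mem_nb {v w : D2V} (h : D2.Adj v w) : w ∈ nb v :=
  List.mem_filter.mpr ⟨mem_univL w, (adj_iff v w).mp h⟩

lemma noTri {a b c : D2V} (h1 : D2.Adj a b) (h2 : D2.Adj b c) (h3 : D2.Adj c a) : False := by
  have H := List.all_eq_true.mp (List.all_eq_true.mp (noShortB a) _ (mem_nb h1)) _ (mem_nb h2)
  rcases Bool.or_eq_true_iff.mp H with H | H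
  · exact h3.ne (eq_of_beq H)
  · have := (Bool.and_eq_true_iff.mp H).1
    rw [Bool.not_eq_true', ← Bool.not_eq_true, ← adj_iff] at this
    exact this h3.symm

lemma noSq {a b c d : D2V} (h1 : D2.Adj a b) (h2 : D2.Adj b c) (h3 : D2.Adj c d)
    (h4 : D2.Adj d a) (hac : a ≠ c) (hbd : b ≠ d) : False := by
  have H := List.all_eq_true.mp (List.all_eq_true.mp (noShortB a) _ (mem_nb h1)) _ (mem_nb h2)
  rcases Bool.or_eq_true_iff.mp H with H | H
  · exact hac (eq_of_beq H).symm
  · have H2 := List.all_eq_true.mp (Bool.and_eq_true_iff.mp H).2 _ (mem_nb h3)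
    rcases Bool.or_eq_true_iff.mp H2 with H2 | H2
    · exact hbd (eq_of_beq H2).symm
    · rw [Bool.not_eq_true', ← Bool.not_eq_true, ← adj_iff] at H2
      exact H2 h4

open D2V in
lemma egirth_eq : D2.egirth = 5 := by
  apply le_antisymm
  · -- pentagon A1 A2 B4 B3 B2
    have h1 : D2.Adj (A 1) (A 2) := (adj_iff _ _).mpr rfl
    have h2 : D2.Adj (A 2) (B 4) := (adj_iff _ _).mpr rfl
    have h3 : D2.Adj (B 4) (B 3) := (adj_iff _ _).mpr rfl
    have h4 : D2.Adj (B 3) (B 2) := (adj_iff _ _).mpr rfl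
    have h5 : D2.Adj (B 2) (A 1) := (adj_iff _ _).mpr rfl
    let w : D2.Walk (A 1) (A 1) :=
      .cons h1 (.cons h2 (.cons h3 (.cons h4 (.cons h5 .nil))))
    have hc : w.IsCycle := by
      rw [SimpleGraph.Walk.isCycle_def]
      refine ⟨?_, ?_, ?_⟩
      · rw [SimpleGraph.Walk.isTrail_def]
        simp only [w, SimpleGraph.Walk.edges_cons, SimpleGraph.Walk.edges_nil]
        decide
      · simp [w]
      · simp only [w, SimpleGraph.Walk.support_cons, SimpleGraph.Walk.support_nil, List.tail_cons]
        decide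
    have hle : D2.egirth ≤ (w.length : ℕ∞) :=
      iInf_le_of_le (A 1) (iInf_le_of_le w (iInf_le _ hc))
    simpa [w] using hle
  · rw [SimpleGraph.le_egirth]
    intro a w hw
    have h3 := hw.three_le_length
    suffices h : 5 ≤ w.length by exact_mod_cast h
    by_contra h
    push_neg at h
    interval_cases hl : w.length
    · -- length 3
      obtain - | ⟨h1, w⟩ := w
      · simp at hl
      obtain - | ⟨h2, w⟩ := w
      · simp at hl
      obtain - | ⟨h3, w⟩ := w
      · simp at hl
      obtain - | ⟨h4, w⟩ := w
      · exact noTri h1 h2 h3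
      · simp at hl
    · -- length 4
      obtain - | ⟨h1, w⟩ := w
      · simp at hl
      obtain - | ⟨h2, w⟩ := w
      · simp at hl
      obtain - | ⟨h3, w⟩ := w
      · simp at hl
      obtain - | ⟨h4, w⟩ := w
      · simp at hl
      obtain - | ⟨h5, w⟩ := w
      · have hnd := hw.2
        simp [SimpleGraph.Walk.support_cons] at hnd
        exact noSq h1 h2 h3 h4 (fun e => hnd.2.1.2 e.symm) hnd.1.2.1
      · simp at hl

theorem D2_cubic_girth_five :
    (∀ v : D2V, D2.degree v = 3) ∧ D2.girth = 5 := by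
  refine ⟨by decide, ?_⟩
  rw [SimpleGraph.girth, egirth_eq]
  rfl
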